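/- Let k be a field, n a positive integer, w ∈ ℤⁿ, and J an ideal of the Laurent polynomial ring k[x₁^{±1},…,x_n^{±1}]. Then the initial ideal in_w J is generated by its elements whose supports are contained in w^⊥; that is, in_w J equals the ideal generated by {g ∈ in_w J : ⟨u,w⟩ = 0 for every u ∈ supp g}. -/

import Mathlib

noncomputable section
open scoped Classical

/-- The Laurent polynomial ring `k[x₁^{±1},…,x_n^{±1}]`, realized as the additive monoid
algebra on `ℤⁿ`. -/
abbrev Laur (k : Type*) [CommRing k] (n : ℕ) : Type _ := AddMonoidAlgebra k (Fin n → ℤ)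

variable {k : Type*} {n : ℕ}

/-- The standard pairing `⟨u,w⟩ = ∑ i, uᵢ wᵢ`. -/
def pairZ (u w : Fin n → ℤ) : ℤ := ∑ i, u i * w i

/-- `trop(f)(w) = min {⟨u,w⟩ : u ∈ supp f}` (junk value for `f = 0`). -/
def tropZ [CommRing k] (w : Fin n → ℤ) (f : Laur k n) : ℤ :=
  sInf ((fun u => pairZ u w) '' (f.coeff.support : Set (Fin n → ℤ)))

/-- `init_w f`: the sum of the terms of `f` whose exponent `u` satisfies
`⟨u,w⟩ = trop(f)(w)`; `init_w 0 = 0`. -/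
def initZ [CommRing k] (w : Fin n → ℤ) (f : Laur k n) : Laur k n :=
  AddMonoidAlgebra.ofCoeff (Finsupp.filter (fun u => pairZ u w = tropZ w f) f.coeff)

/-- The initial ideal `in_w I`, generated by the initial forms of elements of `I`. -/
def initIdealZ [CommRing k] (w : Fin n → ℤ) (I : Ideal (Laur k n)) : Ideal (Laur k n) :=
  Ideal.span {g | ∃ f ∈ I, g = initZ w f}

/-- `σ_{ξ,w}`: the `k`-algebra automorphism of the Laurent polynomial ring determined by
`x^u ↦ ξ^{⟨u,w⟩} x^u`. -/
def sigmaTw [Field k] (ξ : kˣ) (w : Fin n → ℤ) (f : Laur k n) : Laur k n :=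
  ∑ u ∈ f.coeff.support, AddMonoidAlgebra.ofCoeff (Finsupp.single u (((ξ ^ pairZ u w : kˣ) : k) * f.coeff u))

/-- The monomial `x^u` of the Laurent polynomial ring. -/
def xu [CommRing k] (u : Fin n → ℤ) : Laur k n := AddMonoidAlgebra.single u 1

lemma pairZ_add (u v w : Fin n → ℤ) : pairZ (u + v) w = pairZ u w + pairZ v w := by
  simp only [pairZ, Pi.add_apply, add_mul, Finset.sum_add_distrib]

section Monomials

variable [CommRing k]

lemma coeff_xu_mul (u v : Fin n → ℤ) (g : Laur k n) : (xu u * g).coeff v = g.coeff (-u + v) := by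
  simp [xu]

lemma xu_mul_xu_neg_mul (u : Fin n → ℤ) (g : Laur k n) : xu u * (xu (-u) * g) = g := by
  rw [← mul_assoc, xu, xu, AddMonoidAlgebra.single_mul_single, add_neg_cancel, one_mul,
    ← AddMonoidAlgebra.one_def, one_mul]

lemma pairZ_eq_tropZ_of_mem_support_initZ {w : Fin n → ℤ} {f : Laur k n} {u : Fin n → ℤ}
    (hu : u ∈ (initZ w f).coeff.support) : pairZ u w = tropZ w f := by
  rw [initZ, AddMonoidAlgebra.coeff_ofCoeff, Finsupp.support_filter, Finset.mem_filter] at hu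
  exact hu.2

/-- Dividing by a monomial of the same `w`-degree moves the support into `w^⊥`. -/
lemma mem_span_perp_of_pairZ_eq {w : Fin n → ℤ} {I : Ideal (Laur k n)} {g : Laur k n}
    (hg : g ∈ I) {d : ℤ} (hd : ∀ u ∈ g.coeff.support, pairZ u w = d) :
    g ∈ Ideal.span {h : Laur k n | h ∈ I ∧ ∀ u ∈ h.coeff.support, pairZ u w = 0} := by
  obtain hzero | ⟨u₀, hu₀⟩ := g.coeff.support.eq_empty_or_nonempty
  · rw [Finsupp.support_eq_empty, AddMonoidAlgebra.coeff_eq_zero] at hzero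
    rw [hzero]
    exact zero_mem _
  have hperp : ∀ u ∈ (xu (-u₀) * g).coeff.support, pairZ u w = 0 := by
    intro u hu
    rw [Finsupp.mem_support_iff, coeff_xu_mul, neg_neg] at hu
    have hsum := hd _ (Finsupp.mem_support_iff.mpr hu)
    rw [pairZ_add, hd u₀ hu₀] at hsum
    omega
  rw [← xu_mul_xu_neg_mul u₀ g]
  exact Ideal.mul_mem_left _ _ (Ideal.subset_span ⟨Ideal.mul_mem_left _ _ hg, hperp⟩)

end Monomials

theorem initial_ideal_generated_by_perp_general [Field k] (w : Fin n → ℤ)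
    (J : Ideal (Laur k n)) :
    initIdealZ w J =
      Ideal.span {g : Laur k n | g ∈ initIdealZ w J ∧ ∀ u ∈ g.coeff.support, pairZ u w = 0} := by
  refine le_antisymm (Ideal.span_le.mpr ?_) (Ideal.span_le.mpr fun g hg => hg.1)
  rintro _ ⟨f, hf, rfl⟩
  exact mem_span_perp_of_pairZ_eq (Ideal.subset_span ⟨f, hf, rfl⟩)
    fun _ hu => pairZ_eq_tropZ_of_mem_support_initZ hu

/-- For any ideal `J` of the Laurent polynomial ring, the initial ideal
`in_w J` is generated by its elements whose supports are contained in
`w^⊥ = {u : ⟨u,w⟩ = 0}`. -/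
theorem initial_ideal_generated_by_perp [Field k] (hn : 0 < n) (w : Fin n → ℤ)
    (J : Ideal (Laur k n)) :
    initIdealZ w J =
      Ideal.span {g : Laur k n | g ∈ initIdealZ w J ∧ ∀ u ∈ g.coeff.support, pairZ u w = 0} :=
  initial_ideal_generated_by_perp_general w J

end
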